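/- Let M = 3/2 − √2 and κ = 1038/1000. For f = (f_1,…,f_4), y = (y_1,…,y_4) set A = Σ_{j=1}^{4}(1 − f_j)(1 − y_j) and F_k = (1 − f_k)(1 − y_k)/A for k = 1,…,4, and define α(f,y) = (1/(1/2 − F_1)) · [ (1 − F_1)·y_1(1/2 − y_1)/(1 − y_1) + Σ_{j=2}^{4} F_j·y_j(1/2 − y_j)/(1 − y_j) + 4M·f_1·Σ_{j=2}^{4} F_j/(1 − f_j) ]. Also, for scalars g_1, g_2, z_1, z_2 set B = (1 − g_1)(1 − z_1) + 3(1 − g_2)(1 − z_2), Ĝ_k = (1 − g_k)(1 − z_k)/B, and α̂(g_1,g_2,z_1,z_2) = (1/(1/2 − Ĝ_1)) · [ (1 − Ĝ_1)·z_1(1/2 − z_1)/(1 − z_1) + 3Ĝ_2·z_2(1/2 − z_2)/(1 − z_2) + 12M·g_1·Ĝ_2/(1 − g_2) ]. Then for all f, y ∈ [0, 1/2]^4 with 1/13 ≤ f_j ≤ 1/2 for all j and f_1 + f_2 + f_3 + f_4 = 1, there exist f̂_2, ŷ_2 ∈ [0, 1/2] such that f_1 + 3f̂_2 = 1 and α(f,y)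 ≤ κ · α̂(f_1, f̂_2, y_1, ŷ_2). -/
import Mathlib
set_option maxHeartbeats 1000000

/-- `M = 3/2 − √2`, the maximum of `x(1/2 − x)/(1 − x)` over `[0, 1/2]`. -/
noncomputable def Mconst : ℝ := 3 / 2 - Real.sqrt 2

/-- The contraction rate `α(f, y)` in Case 1 (all `D_j` nonnegative). -/
noncomputable def alphaFn (f1 f2 f3 f4 y1 y2 y3 y4 : ℝ) : ℝ :=
  let A := (1 - f1) * (1 - y1) + (1 - f2) * (1 - y2) +
    (1 - f3) * (1 - y3) + (1 - f4) * (1 - y4)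
  let F2 := (1 - f2) * (1 - y2) / A
  let F3 := (1 - f3) * (1 - y3) / A
  let F4 := (1 - f4) * (1 - y4) / A
  let F1 := (1 - f1) * (1 - y1) / A
  (1 / (1 / 2 - F1)) *
    ((1 - F1) * (y1 * (1 / 2 - y1) / (1 - y1)) +
      (F2 * (y2 * (1 / 2 - y2) / (1 - y2)) + F3 * (y3 * (1 / 2 - y3) / (1 - y3)) +
        F4 * (y4 * (1 / 2 - y4) / (1 - y4))) +
      4 * Mconst * f1 * (F2 / (1 - f2) + F3 / (1 - f3) + F4 / (1 - f4)))

/-- The symmetrized contraction rate `α̂(g₁, g₂, z₁, z₂)`. -/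
noncomputable def alphaHat (g1 g2 z1 z2 : ℝ) : ℝ :=
  let B := (1 - g1) * (1 - z1) + 3 * ((1 - g2) * (1 - z2))
  let G1 := (1 - g1) * (1 - z1) / B
  let G2 := (1 - g2) * (1 - z2) / B
  (1 / (1 / 2 - G1)) *
    ((1 - G1) * (z1 * (1 / 2 - z1) / (1 - z1)) +
      3 * G2 * (z2 * (1 / 2 - z2) / (1 - z2)) +
      12 * Mconst * g1 * G2 / (1 - g2))


lemma amgm' (P m d t : ℝ) (ht : 1 ≤ t) : 4*P*(m*d) ≤ 4*P^2*m^2 + t*d^2 := by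
  nlinarith [sq_nonneg (2*P*m - t*d), mul_nonneg (by linarith : (0:ℝ) ≤ t - 1) (sq_nonneg (2*P*m)), ht]

lemma termEq (c u a q : ℝ) (hu : u ≠ 0) : (c * u / a) * (q / u) = c * q / a := by
  rcases eq_or_ne a 0 with h|h
  · simp [h]
  · field_simp

lemma termEq2 (c u a : ℝ) (hc : c ≠ 0) : (c * u / a) / c = u / a := by
  rcases eq_or_ne a 0 with h|h
  · simp [h]
  · field_simp

lemma termEq3 (k c u a : ℝ) (hc : c ≠ 0) : k * (c * u / a) / c = k * (u / a) := by
  rcases eq_or_ne a 0 with h|h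
  · simp [h]
  · field_simp

lemma core (M f1 f2 f3 f4 u2 u3 u4 v : ℝ)
    (hM0 : 0 ≤ M) (hM : M ≤ 86/1000)
    (hf1 : 1/13 ≤ f1) (hf1' : f1 ≤ 1/2)
    (hf2 : 1/13 ≤ f2) (hf2' : f2 ≤ 1/2)
    (hf3 : 1/13 ≤ f3) (hf3' : f3 ≤ 1/2)
    (hf4 : 1/13 ≤ f4) (hf4' : f4 ≤ 1/2)
    (hsum : f1 + f2 + f3 + f4 = 1)
    (hu2 : 1/2 ≤ u2) (hu2' : u2 ≤ 1)
    (hu3 : 1/2 ≤ u3) (hu3' : u3 ≤ 1)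
    (hu4 : 1/2 ≤ u4) (hu4' : u4 ≤ 1)
    (hv : (2+f1) * v = (1-f2)*u2 + (1-f3)*u3 + (1-f4)*u4) :
    (1-f2)*((1-u2)*(u2-1/2)) + (1-f3)*((1-u3)*(u3-1/2)) + (1-f4)*((1-u4)*(u4-1/2))
      + 4*M*f1*(u2+u3+u4)
    ≤ (1038/1000) * ((2+f1)*((1-v)*(v-1/2)) + 12*M*f1*v) := by
  have hc : (0:ℝ) < 2 + f1 := by linarith
  have ht2 : (1:ℝ) ≤ (2+f1)*(1-f2) := by
    nlinarith only [mul_nonneg (by linarith : (0:ℝ) ≤ f1) (by linarith : (0:ℝ) ≤ 1/2 - f2), hf1, hf2']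
  have ht3 : (1:ℝ) ≤ (2+f1)*(1-f3) := by
    nlinarith only [mul_nonneg (by linarith : (0:ℝ) ≤ f1) (by linarith : (0:ℝ) ≤ 1/2 - f3), hf1, hf3']
  have ht4 : (1:ℝ) ≤ (2+f1)*(1-f4) := by
    nlinarith only [mul_nonneg (by linarith : (0:ℝ) ≤ f1) (by linarith : (0:ℝ) ≤ 1/2 - f4), hf1, hf4']
  have hv1 : 1/2 ≤ v := by
    have h12 : (2+f1)*(1/2) ≤ (2+f1)*v := by
      rw [hv]
      linarith only [hsum,
        mul_nonneg (by linarith : (0:ℝ) ≤ 1 - f2) (by linarith : (0:ℝ) ≤ u2 - 1/2),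
        mul_nonneg (by linarith : (0:ℝ) ≤ 1 - f3) (by linarith : (0:ℝ) ≤ u3 - 1/2),
        mul_nonneg (by linarith : (0:ℝ) ≤ 1 - f4) (by linarith : (0:ℝ) ≤ u4 - 1/2)]
    exact le_of_mul_le_mul_left h12 hc
  have hv2 : v ≤ 1 := by
    have h12 : (2+f1)*v ≤ (2+f1)*1 := by
      rw [hv]
      linarith only [hsum,
        mul_nonneg (by linarith : (0:ℝ) ≤ 1 - f2) (by linarith : (0:ℝ) ≤ 1 - u2),
        mul_nonneg (by linarith : (0:ℝ) ≤ 1 - f3) (by linarith : (0:ℝ) ≤ 1 - u3),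
        mul_nonneg (by linarith : (0:ℝ) ≤ 1 - f4) (by linarith : (0:ℝ) ≤ 1 - u4)]
    exact le_of_mul_le_mul_left h12 hc
  have hMf1 : 0 ≤ M*f1 := mul_nonneg hM0 (by linarith)
  have hMf1' : M*f1 ≤ 43/1000 := by
    nlinarith only [mul_nonneg hM0 (by linarith : (0:ℝ) ≤ 1/2 - f1), hM, hM0, hf1, hf1']
  have hm2 : (3*f2+f1-1)^2 ≤ 121/169 := by
    nlinarith only [hsum, hf1, hf2, hf3, hf4, hf1', hf2', hf3', hf4',
      (by linarith : 3*f2+f1-1 ≤ 11/13), (by linarith : -(9/13) ≤ 3*f2+f1-1)]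
  have hm3 : (3*f3+f1-1)^2 ≤ 121/169 := by
    nlinarith only [(by linarith : 3*f3+f1-1 ≤ 11/13), (by linarith : -(9/13) ≤ 3*f3+f1-1)]
  have hm4 : (3*f4+f1-1)^2 ≤ 121/169 := by
    nlinarith only [(by linarith : 3*f4+f1-1 ≤ 11/13), (by linarith : -(9/13) ≤ 3*f4+f1-1)]
  set d2 : ℝ := u2 - v with hd2
  set d3 : ℝ := u3 - v with hd3
  set d4 : ℝ := u4 - v with hd4
  clear_value d2 d3 d4
  have hd : (1-f2)*d2 + (1-f3)*d3 + (1-f4)*d4 = 0 := by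
    rw [hd2, hd3, hd4]; linear_combination -hv + v*hsum
  have hVar : (2+f1)*((1-v)*(v-1/2)) - ((1-f2)*((1-u2)*(u2-1/2)) + (1-f3)*((1-u3)*(u3-1/2)) + (1-f4)*((1-u4)*(u4-1/2)))
      = (1-f2)*d2^2 + (1-f3)*d3^2 + (1-f4)*d4^2 := by
    rw [hd2, hd3, hd4] at hd ⊢
    linear_combination (2*v - 3/2)*hd + ((1-v)*(v-1/2))*hsum
  have hsd4 : (2+f1)*(4*M*f1*(d2+d3+d4)) =
      4*M*f1*((3*f2+f1-1)*d2) + 4*M*f1*((3*f3+f1-1)*d3) + 4*M*f1*((3*f4+f1-1)*d4) := by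
    linear_combination (4*M*f1*3)*hd
  have hA2 : 4*M*f1*((3*f2+f1-1)*d2) ≤ 4*(M*f1)^2*(3*f2+f1-1)^2 + ((2+f1)*(1-f2))*d2^2 := by
    have h := amgm' (M*f1) (3*f2+f1-1) d2 ((2+f1)*(1-f2)) ht2
    linarith only [h]
  have hA3 : 4*M*f1*((3*f3+f1-1)*d3) ≤ 4*(M*f1)^2*(3*f3+f1-1)^2 + ((2+f1)*(1-f3))*d3^2 := by
    have h := amgm' (M*f1) (3*f3+f1-1) d3 ((2+f1)*(1-f3)) ht3
    linarith only [h]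
  have hA4 : 4*M*f1*((3*f4+f1-1)*d4) ≤ 4*(M*f1)^2*(3*f4+f1-1)^2 + ((2+f1)*(1-f4))*d4^2 := by
    have h := amgm' (M*f1) (3*f4+f1-1) d4 ((2+f1)*(1-f4)) ht4
    linarith only [h]
  have hSq : 4*(M*f1)^2*((3*f2+f1-1)^2 + (3*f3+f1-1)^2 + (3*f4+f1-1)^2) ≤ (228/1000)*(M*f1)*(2+f1) := by
    nlinarith only [mul_le_mul_of_nonneg_left
        (show (3*f2+f1-1)^2 + (3*f3+f1-1)^2 + (3*f4+f1-1)^2 ≤ 363/169 by linarith only [hm2, hm3, hm4])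
        (by positivity : (0:ℝ) ≤ 4*(M*f1)^2),
      mul_le_mul_of_nonneg_left hMf1' hMf1,
      mul_nonneg hMf1 (by linarith only [hf1] : (0:ℝ) ≤ f1 - 1/13), hMf1, hMf1']
  have hbig : (2+f1)*(4*M*f1*(d2+d3+d4)) ≤ (2+f1)*((228/1000)*(M*f1) + ((1-f2)*d2^2 + (1-f3)*d3^2 + (1-f4)*d4^2)) := by
    have hexp : (2+f1)*((228/1000)*(M*f1) + ((1-f2)*d2^2 + (1-f3)*d3^2 + (1-f4)*d4^2)) =
        (228/1000)*(M*f1)*(2+f1) + (((2+f1)*(1-f2))*d2^2 + ((2+f1)*(1-f3))*d3^2 + ((2+f1)*(1-f4))*d4^2) := by ring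
    rw [hexp, hsd4]
    linarith only [hA2, hA3, hA4, hSq]
  have hstep : 4*M*f1*(d2+d3+d4) ≤ (228/1000)*(M*f1) + ((1-f2)*d2^2 + (1-f3)*d3^2 + (1-f4)*d4^2) :=
    le_of_mul_le_mul_left hbig hc
  have hpos1 : 0 ≤ (2+f1)*((1-v)*(v-1/2)) :=
    mul_nonneg (by linarith) (mul_nonneg (by linarith) (by linarith))
  have hkn : (228/1000)*(M*f1) ≤ (456/1000)*((M*f1)*v) := by
    nlinarith only [mul_nonneg hMf1 (by linarith only [hv1] : (0:ℝ) ≤ v - 1/2), hMf1]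
  have hMu : M*f1*(u2+u3+u4) = 3*((M*f1)*v) + M*f1*(d2+d3+d4) := by
    rw [hd2, hd3, hd4]; ring
  linarith only [hVar, hstep, hpos1, hkn, hMu, hMf1]


/-- Symmetrization: for `f, y ∈ [0, 1/2]⁴` with `1/13 ≤ f_j ≤ 1/2` and `Σ f_j = 1`,
there are `f̂₂, ŷ₂ ∈ [0, 1/2]` with `f₁ + 3f̂₂ = 1` and
`α(f, y) ≤ (1038/1000)·α̂(f₁, f̂₂, y₁, ŷ₂)`. -/
theorem alpha_le_alphaHat (f1 f2 f3 f4 y1 y2 y3 y4 : ℝ)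
    (hf1 : f1 ∈ Set.Icc (1 / 13 : ℝ) (1 / 2)) (hf2 : f2 ∈ Set.Icc (1 / 13 : ℝ) (1 / 2))
    (hf3 : f3 ∈ Set.Icc (1 / 13 : ℝ) (1 / 2)) (hf4 : f4 ∈ Set.Icc (1 / 13 : ℝ) (1 / 2))
    (hy1 : y1 ∈ Set.Icc (0 : ℝ) (1 / 2)) (hy2 : y2 ∈ Set.Icc (0 : ℝ) (1 / 2))
    (hy3 : y3 ∈ Set.Icc (0 : ℝ) (1 / 2)) (hy4 : y4 ∈ Set.Icc (0 : ℝ) (1 / 2))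
    (hsum : f1 + f2 + f3 + f4 = 1) :
    ∃ fh2 yh2 : ℝ, fh2 ∈ Set.Icc (0 : ℝ) (1 / 2) ∧ yh2 ∈ Set.Icc (0 : ℝ) (1 / 2) ∧
      f1 + 3 * fh2 = 1 ∧
      alphaFn f1 f2 f3 f4 y1 y2 y3 y4 ≤ (1038 / 1000) * alphaHat f1 fh2 y1 yh2 := by
  obtain ⟨hf1l, hf1u⟩ := hf1
  obtain ⟨hf2l, hf2u⟩ := hf2
  obtain ⟨hf3l, hf3u⟩ := hf3
  obtain ⟨hf4l, hf4u⟩ := hf4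
  obtain ⟨hy1l, hy1u⟩ := hy1
  obtain ⟨hy2l, hy2u⟩ := hy2
  obtain ⟨hy3l, hy3u⟩ := hy3
  obtain ⟨hy4l, hy4u⟩ := hy4
  have hM0 : 0 ≤ Mconst := by
    have h : Real.sqrt 2 ≤ 3/2 := by
      nlinarith [Real.sq_sqrt (show (0:ℝ) ≤ 2 by norm_num), Real.sqrt_nonneg 2]
    simp only [Mconst]; linarith
  have hM86 : Mconst ≤ 86/1000 := by
    have h : (1414/1000 : ℝ) ≤ Real.sqrt 2 := by
      nlinarith [Real.sq_sqrt (show (0:ℝ) ≤ 2 by norm_num), Real.sqrt_nonneg 2]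
    simp only [Mconst]; linarith
  have h2f1 : (0:ℝ) < 2 + f1 := by linarith
  have h2f1' : (2 + f1 : ℝ) ≠ 0 := ne_of_gt h2f1
  set S : ℝ := (1 - f2) * (1 - y2) + (1 - f3) * (1 - y3) + (1 - f4) * (1 - y4) with hSdef
  have hSlow : (2 + f1)/2 ≤ S := by
    rw [hSdef]
    nlinarith only [hsum, mul_nonneg (by linarith : (0:ℝ) ≤ 1 - f2) (by linarith : (0:ℝ) ≤ 1/2 - y2),
      mul_nonneg (by linarith : (0:ℝ) ≤ 1 - f3) (by linarith : (0:ℝ) ≤ 1/2 - y3),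
      mul_nonneg (by linarith : (0:ℝ) ≤ 1 - f4) (by linarith : (0:ℝ) ≤ 1/2 - y4)]
  have hShigh : S ≤ 2 + f1 := by
    rw [hSdef]
    nlinarith only [hsum, mul_nonneg (by linarith : (0:ℝ) ≤ 1 - f2) (by linarith : (0:ℝ) ≤ y2),
      mul_nonneg (by linarith : (0:ℝ) ≤ 1 - f3) (by linarith : (0:ℝ) ≤ y3),
      mul_nonneg (by linarith : (0:ℝ) ≤ 1 - f4) (by linarith : (0:ℝ) ≤ y4)]
  have hS0 : (0:ℝ) < S := by linarith
  clear_value S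
  have hv1 : (1:ℝ)/2 ≤ S/(2+f1) := by
    rw [le_div_iff₀ h2f1]; linarith
  have hv2 : S/(2+f1) ≤ 1 := by
    rw [div_le_one h2f1]; linarith
  have hvS : (2+f1) * (S/(2+f1)) = S := by field_simp
  refine ⟨(1-f1)/3, 1 - S/(2+f1), ⟨by linarith, by linarith⟩, ⟨by linarith, by linarith⟩,
    by ring, ?_⟩
  -- nonvanishing denominators
  have hy1d : (0:ℝ) < 1 - y1 := by linarith
  have hy2d : (0:ℝ) < 1 - y2 := by linarith
  have hy3d : (0:ℝ) < 1 - y3 := by linarith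
  have hy4d : (0:ℝ) < 1 - y4 := by linarith
  have hf2d : (0:ℝ) < 1 - f2 := by linarith
  have hf3d : (0:ℝ) < 1 - f3 := by linarith
  have hf4d : (0:ℝ) < 1 - f4 := by linarith
  have hxsum : (1:ℝ) ≤ (1 - f2) * (1 - y2) + (1 - f3) * (1 - y3) + (1 - f4) * (1 - y4) := by
    rw [← hSdef]; linarith
  have ha1 : (1 - f1) * (1 - y1) ≤ 12/13 := by nlinarith only [hf1l, hy1l, hy1u, hf1u]
  have ha1p : (0:ℝ) ≤ (1 - f1) * (1 - y1) := mul_nonneg (by linarith) (by linarith)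
  have hA0 : (0:ℝ) < ((1 - f1) * (1 - y1) + (1 - f2) * (1 - y2) + (1 - f3) * (1 - y3) + (1 - f4) * (1 - y4)) := by nlinarith only [ha1p, hxsum]
  have hA0' : ((1 - f1) * (1 - y1) + (1 - f2) * (1 - y2) + (1 - f3) * (1 - y3) + (1 - f4) * (1 - y4)) ≠ 0 := ne_of_gt hA0
  have hpref : (0:ℝ) < 1 / 2 - (1 - f1) * (1 - y1) / ((1 - f1) * (1 - y1) + (1 - f2) * (1 - y2) + (1 - f3) * (1 - y3) + (1 - f4) * (1 - y4)) := by
    rw [sub_pos, div_lt_iff₀ hA0]; linarith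
  have hF1le : (1 - f1) * (1 - y1) / ((1 - f1) * (1 - y1) + (1 - f2) * (1 - y2) + (1 - f3) * (1 - y3) + (1 - f4) * (1 - y4)) ≤ 1 := by
    rw [div_le_one hA0]; nlinarith only [hxsum]
  have ht1 : (0:ℝ) ≤ (y1 * (1 / 2 - y1) / (1 - y1)) :=
    div_nonneg (mul_nonneg hy1l (by linarith)) (by linarith)
  have hX : (0:ℝ) ≤ ((1 - (1 - f1) * (1 - y1) / ((1 - f1) * (1 - y1) + (1 - f2) * (1 - y2) + (1 - f3) * (1 - y3) + (1 - f4) * (1 - y4))) * (y1 * (1 / 2 - y1) / (1 - y1))) := mul_nonneg (by linarith) ht1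
  -- evaluation of alphaFn
  have e1 : alphaFn f1 f2 f3 f4 y1 y2 y3 y4 = (1 / (1 / 2 - (1 - f1) * (1 - y1) / ((1 - f1) * (1 - y1) + (1 - f2) * (1 - y2) + (1 - f3) * (1 - y3) + (1 - f4) * (1 - y4)))) * (((1 - (1 - f1) * (1 - y1) / ((1 - f1) * (1 - y1) + (1 - f2) * (1 - y2) + (1 - f3) * (1 - y3) + (1 - f4) * (1 - y4))) * (y1 * (1 / 2 - y1) / (1 - y1))) + ((1-f2)*(y2*(1/2-y2)) + (1-f3)*(y3*(1/2-y3)) + (1-f4)*(y4*(1/2-y4)) + 4*Mconst*f1*((1-y2)+(1-y3)+(1-y4))) / ((1 - f1) * (1 - y1) + (1 - f2) * (1 - y2) + (1 - f3) * (1 - y3) + (1 - f4) * (1 - y4))) := by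
    simp only [alphaFn]
    rw [termEq _ _ _ _ (ne_of_gt hy2d), termEq _ _ _ _ (ne_of_gt hy3d),
      termEq _ _ _ _ (ne_of_gt hy4d), termEq2 _ _ _ (ne_of_gt hf2d),
      termEq2 _ _ _ (ne_of_gt hf3d), termEq2 _ _ _ (ne_of_gt hf4d)]
    ring
  -- evaluation of alphaHat
  have hAB : (1 - f1) * (1 - y1) + 3 * ((1 - (1 - f1) / 3) * (1 - (1 - S / (2 + f1)))) = ((1 - f1) * (1 - y1) + (1 - f2) * (1 - y2) + (1 - f3) * (1 - y3) + (1 - f4) * (1 - y4)) := by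
    rw [hSdef]; field_simp; ring
  have hsimp2 : (1:ℝ) - (1 - S / (2 + f1)) = S / (2 + f1) := by ring
  have hvpos : (0:ℝ) < S / (2 + f1) := div_pos hS0 h2f1
  have hfh2d : (0:ℝ) < 1 - (1 - f1) / 3 := by linarith
  have e2 : alphaHat f1 ((1 - f1) / 3) y1 (1 - S / (2 + f1)) = (1 / (1 / 2 - (1 - f1) * (1 - y1) / ((1 - f1) * (1 - y1) + (1 - f2) * (1 - y2) + (1 - f3) * (1 - y3) + (1 - f4) * (1 - y4)))) * (((1 - (1 - f1) * (1 - y1) / ((1 - f1) * (1 - y1) + (1 - f2) * (1 - y2) + (1 - f3) * (1 - y3) + (1 - f4) * (1 - y4))) * (y1 * (1 / 2 - y1) / (1 - y1))) + ((2+f1)*((1 - (S/(2+f1)))*((S/(2+f1)) - 1/2)) + 12*Mconst*f1*(S/(2+f1))) / ((1 - f1) * (1 - y1) + (1 - f2) * (1 - y2) + (1 - f3) * (1 - y3) + (1 - f4) * (1 - y4))) := by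
    simp only [alphaHat]
    rw [hAB, hsimp2]
    rw [show (3:ℝ) * ((1 - (1 - f1) / 3) * (S / (2 + f1)) / ((1 - f1) * (1 - y1) + (1 - f2) * (1 - y2) + (1 - f3) * (1 - y3) + (1 - f4) * (1 - y4))) *
        ((1 - S / (2 + f1)) * (1 / 2 - (1 - S / (2 + f1))) / (S / (2 + f1))) =
        3 * ((1 - (1 - f1) / 3) * ((1 - S / (2 + f1)) * (1 / 2 - (1 - S / (2 + f1)))) / ((1 - f1) * (1 - y1) + (1 - f2) * (1 - y2) + (1 - f3) * (1 - y3) + (1 - f4) * (1 - y4)))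
      from by rw [mul_assoc, termEq _ _ _ _ (ne_of_gt hvpos)],
      termEq3 _ _ _ _ (ne_of_gt hfh2d)]
    ring
  -- core inequality
  have hv' : (2 + f1) * (S / (2 + f1)) = (1 - f2) * (1 - y2) + (1 - f3) * (1 - y3) + (1 - f4) * (1 - y4) := by
    rw [hvS, hSdef]
  have hc := core Mconst f1 f2 f3 f4 (1 - y2) (1 - y3) (1 - y4) (S / (2 + f1)) hM0 hM86
    hf1l hf1u hf2l hf2u hf3l hf3u hf4l hf4u hsum
    (by linarith) (by linarith) (by linarith) (by linarith) (by linarith) (by linarith) hv'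
  have hcore : ((1-f2)*(y2*(1/2-y2)) + (1-f3)*(y3*(1/2-y3)) + (1-f4)*(y4*(1/2-y4)) + 4*Mconst*f1*((1-y2)+(1-y3)+(1-y4))) ≤ (1038/1000) * ((2+f1)*((1 - (S/(2+f1)))*((S/(2+f1)) - 1/2)) + 12*Mconst*f1*(S/(2+f1))) := by linarith only [hc]
  -- assemble
  have hPA : ((1-f2)*(y2*(1/2-y2)) + (1-f3)*(y3*(1/2-y3)) + (1-f4)*(y4*(1/2-y4)) + 4*Mconst*f1*((1-y2)+(1-y3)+(1-y4))) / ((1 - f1) * (1 - y1) + (1 - f2) * (1 - y2) + (1 - f3) * (1 - y3) + (1 - f4) * (1 - y4)) ≤ ((1038/1000) * ((2+f1)*((1 - (S/(2+f1)))*((S/(2+f1)) - 1/2)) + 12*Mconst*f1*(S/(2+f1)))) / ((1 - f1) * (1 - y1) + (1 - f2) * (1 - y2) + (1 - f3) * (1 - y3) + (1 - f4) * (1 - y4)) := by gcongr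
  rw [mul_div_assoc] at hPA
  have hin : ((1 - (1 - f1) * (1 - y1) / ((1 - f1) * (1 - y1) + (1 - f2) * (1 - y2) + (1 - f3) * (1 - y3) + (1 - f4) * (1 - y4))) * (y1 * (1 / 2 - y1) / (1 - y1))) + ((1-f2)*(y2*(1/2-y2)) + (1-f3)*(y3*(1/2-y3)) + (1-f4)*(y4*(1/2-y4)) + 4*Mconst*f1*((1-y2)+(1-y3)+(1-y4))) / ((1 - f1) * (1 - y1) + (1 - f2) * (1 - y2) + (1 - f3) * (1 - y3) + (1 - f4) * (1 - y4)) ≤ (1038/1000) * (((1 - (1 - f1) * (1 - y1) / ((1 - f1) * (1 - y1) + (1 - f2) * (1 - y2) + (1 - f3) * (1 - y3) + (1 - f4) * (1 - y4))) * (y1 * (1 / 2 - y1) / (1 - y1))) + ((2+f1)*((1 - (S/(2+f1)))*((S/(2+f1)) - 1/2)) + 12*Mconst*f1*(S/(2+f1))) / ((1 - f1) * (1 - y1) + (1 - f2) * (1 - y2) + (1 - f3) * (1 - y3) + (1 - f4) * (1 - y4))) := by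
    linarith only [hPA, hX]
  have hprefpos : (0:ℝ) < (1 / (1 / 2 - (1 - f1) * (1 - y1) / ((1 - f1) * (1 - y1) + (1 - f2) * (1 - y2) + (1 - f3) * (1 - y3) + (1 - f4) * (1 - y4)))) := one_div_pos.mpr hpref
  rw [e1, e2]
  have hfin := mul_le_mul_of_nonneg_left hin (le_of_lt hprefpos)
  linarith only [hfin]
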